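/- Existence of the minimal circumscribed ellipse and Euler's remarkable property: let p₁, p₂, p₃ ∈ ℝ² be affinely independent points. Then there exist real numbers A, B, C, D, E, F with A > 0 and A·C − B² > 0 such that Q(x,y) = A·x² + 2B·x·y + C·y² + 2D·x + 2E·y + F vanishes at p₁, p₂, p₃, the two-dimensional Lebesgue measure of {(x,y) ∈ ℝ² : Q(x,y) ≤ 0} equals (4π/(3·√3)) · (1/2)·|det(p₂ − p₁, p₃ − p₁)|, and the gradient of Q vanishes exactly at the centroid (p₁ + p₂ + p₃)/3 (i.e. the centre of this minimal-area ellipse is the centre of gravity of the triangle). -/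

import Mathlib

/-!
Let `g` be the centroid, `a = p₁ - g`, `c = p₂ - p₃`, write `u × v = u.1 v.2 - u.2 v.1` and
`T = (p₂ - p₁) × (p₃ - p₁)`, so that `a × c = 2T/3`. The ellipse is `q (p - g) ≤ (a × c)²` with
`q v = 3 (a × v)² + (c × v)²`; its gradient vanishes only at `g`. Completing the square maps an
ellipse `q (p - g) ≤ r` linearly onto the unit disc, so its area is `π r / √(AC - B²)`; here
`AC - B² = 3 (a × c)²`, giving area `π |a × c| / √3 = (4π / (3√3)) · |T| / 2`.
-/

open MeasureTheory Real

lemma volume_setOf_sq_add_sq_le_one :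
    volume {u : ℝ × ℝ | u.1 ^ 2 + u.2 ^ 2 ≤ 1} = ENNReal.ofReal π := by
  have hdisk : Complex.measurableEquivRealProd ⁻¹' {u : ℝ × ℝ | u.1 ^ 2 + u.2 ^ 2 ≤ 1}
      = Metric.closedBall (0 : ℂ) 1 := by
    ext z
    simp only [Set.mem_preimage, Complex.measurableEquivRealProd_apply, Set.mem_ofPred_eq,
      mem_closedBall_zero_iff, Complex.norm_def, Complex.normSq_apply, sqrt_le_one]
    ring_nf
  rw [← Complex.volume_preserving_equiv_real_prod.measure_preimage_equiv, hdisk,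
    Complex.volume_closedBall, ← NNReal.coe_real_pi, ENNReal.ofReal_coe_nnreal]
  simp

lemma volume_setOf_quadForm_le {A B C r : ℝ} (hA : 0 < A) (hΔ : 0 < A * C - B ^ 2)
    (hr : 0 < r) :
    volume {u : ℝ × ℝ | A * u.1 ^ 2 + 2 * B * u.1 * u.2 + C * u.2 ^ 2 ≤ r}
      = ENNReal.ofReal (π * r / √(A * C - B ^ 2)) := by
  obtain ⟨a, ha, rfl⟩ : ∃ a, 0 < a ∧ A = a ^ 2 := ⟨√A, sqrt_pos.2 hA, (sq_sqrt hA.le).symm⟩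
  obtain ⟨s, hs, rfl⟩ : ∃ s, 0 < s ∧ r = s ^ 2 := ⟨√r, sqrt_pos.2 hr, (sq_sqrt hr.le).symm⟩
  set d := √(a ^ 2 * C - B ^ 2)
  have hd : 0 < d := sqrt_pos.2 hΔ
  have hd2 : d ^ 2 = a ^ 2 * C - B ^ 2 := sq_sqrt hΔ.le
  -- completing the square: `a²x² + 2Bxy + Cy² = (a x + (B/a) y)² + (d/a)² y²`
  set L := Matrix.toLin (Module.Basis.finTwoProd ℝ) (Module.Basis.finTwoProd ℝ)
    !![a / s, B / (a * s); 0, d / (a * s)]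
  have hdet : LinearMap.det L = d / s ^ 2 := by
    rw [LinearMap.det_toLin, Matrix.det_fin_two_of]
    field_simp
    ring
  have hset : {u : ℝ × ℝ | a ^ 2 * u.1 ^ 2 + 2 * B * u.1 * u.2 + C * u.2 ^ 2 ≤ s ^ 2}
      = L ⁻¹' {v | v.1 ^ 2 + v.2 ^ 2 ≤ 1} := by
    ext u
    have hL : (L u).1 ^ 2 + (L u).2 ^ 2
        = (a ^ 2 * u.1 ^ 2 + 2 * B * u.1 * u.2 + C * u.2 ^ 2) / s ^ 2 := by
      simp only [L, Matrix.toLin_finTwoProd_apply]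
      field_simp
      linear_combination u.2 ^ 2 * hd2
    rw [Set.mem_preimage, Set.mem_ofPred_eq, Set.mem_ofPred_eq, hL, div_le_one (by positivity)]
  rw [hset, Measure.addHaar_preimage_linearMap _ (by rw [hdet]; positivity),
    volume_setOf_sq_add_sq_le_one, ← ENNReal.ofReal_mul (abs_nonneg _), hdet]
  congr 1
  rw [abs_of_pos (by positivity)]
  field_simp

lemma volume_setOf_quadForm_sub_le {A B C r : ℝ} (hA : 0 < A) (hΔ : 0 < A * C - B ^ 2)
    (hr : 0 < r) (g : ℝ × ℝ) :
    volume {p : ℝ × ℝ | A * (p.1 - g.1) ^ 2 + 2 * B * (p.1 - g.1) * (p.2 - g.2)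
        + C * (p.2 - g.2) ^ 2 ≤ r}
      = ENNReal.ofReal (π * r / √(A * C - B ^ 2)) := by
  rw [← volume_setOf_quadForm_le hA hΔ hr, ← measure_preimage_add_right volume g]
  congr 1
  ext p
  simp

lemma conic_eq_quadForm_sub_sub (A B C g₁ g₂ r x y : ℝ) :
    A * x ^ 2 + 2 * B * x * y + C * y ^ 2 + 2 * -(A * g₁ + B * g₂) * x
        + 2 * -(B * g₁ + C * g₂) * y + (A * g₁ ^ 2 + 2 * B * g₁ * g₂ + C * g₂ ^ 2 - r)
      = A * (x - g₁) ^ 2 + 2 * B * (x - g₁) * (y - g₂) + C * (y - g₂) ^ 2 - r := by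
  ring

lemma pos_of_mul_sub_sq_pos {A B C : ℝ} (hA : 0 ≤ A) (hΔ : 0 < A * C - B ^ 2) : 0 < A :=
  hA.lt_of_ne (by rintro rfl; nlinarith)

lemma conic_gradient_eq_zero_iff {A B C : ℝ} (hΔ : A * C - B ^ 2 ≠ 0) (g₁ g₂ x y : ℝ) :
    (2 * A * x + 2 * B * y + 2 * -(A * g₁ + B * g₂) = 0 ∧
        2 * B * x + 2 * C * y + 2 * -(B * g₁ + C * g₂) = 0) ↔ x = g₁ ∧ y = g₂ := by
  constructor
  · rintro ⟨h₁, h₂⟩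
    refine ⟨sub_eq_zero.1 (mul_left_cancel₀ hΔ ?_), sub_eq_zero.1 (mul_left_cancel₀ hΔ ?_)⟩
    · linear_combination (C * h₁ - B * h₂) / 2
    · linear_combination (A * h₂ - B * h₁) / 2
  · rintro ⟨rfl, rfl⟩
    constructor <;> ring

lemma det_sub_ne_zero_of_affineIndependent {p₁ p₂ p₃ : ℝ × ℝ}
    (h : AffineIndependent ℝ ![p₁, p₂, p₃]) :
    (p₂.1 - p₁.1) * (p₃.2 - p₁.2) - (p₂.2 - p₁.2) * (p₃.1 - p₁.1) ≠ 0 := by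
  have hlin : ∀ α β : ℝ, α • (p₂ - p₁) + β • (p₃ - p₁) = 0 → α = 0 ∧ β = 0 := by
    intro α β hαβ
    have := affineIndependent_iff.1 h Finset.univ ![-(α + β), α, β]
      (by simp [Fin.sum_univ_three]) (by simp [Fin.sum_univ_three, ← hαβ]; module)
    exact ⟨this 1 (Finset.mem_univ _), this 2 (Finset.mem_univ _)⟩
  intro hδ
  obtain ⟨h₁, h₂⟩ := hlin (p₃.2 - p₁.2) (p₁.2 - p₂.2)
    (Prod.ext (by simp; linear_combination hδ) (by simp; ring))
  obtain ⟨h₃, h₄⟩ := hlin (p₃.1 - p₁.1) (p₁.1 - p₂.1)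
    (Prod.ext (by simp; ring) (by simp; linear_combination -hδ))
  exact one_ne_zero (hlin 1 0 (Prod.ext (by simp; linarith) (by simp; linarith))).1

/-- E692: existence of the minimal-area ellipse through three affinely independent
points `p₁, p₂, p₃`: there is an ellipse through the three points whose area is
exactly `(4π/(3√3))` times the area of the triangle, and whose centre (the unique
zero of the gradient of its quadratic equation) is the centroid `(p₁+p₂+p₃)/3`. -/
theorem euler_minimal_ellipse_exists_centroid (p₁ p₂ p₃ : ℝ × ℝ)
    (hind : AffineIndependent ℝ ![p₁, p₂, p₃]) :
    ∃ A B C D E F : ℝ, 0 < A ∧ 0 < A * C - B ^ 2 ∧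
      (A * p₁.1 ^ 2 + 2 * B * p₁.1 * p₁.2 + C * p₁.2 ^ 2
        + 2 * D * p₁.1 + 2 * E * p₁.2 + F = 0) ∧
      (A * p₂.1 ^ 2 + 2 * B * p₂.1 * p₂.2 + C * p₂.2 ^ 2
        + 2 * D * p₂.1 + 2 * E * p₂.2 + F = 0) ∧
      (A * p₃.1 ^ 2 + 2 * B * p₃.1 * p₃.2 + C * p₃.2 ^ 2
        + 2 * D * p₃.1 + 2 * E * p₃.2 + F = 0) ∧
      MeasureTheory.volume
          {p : ℝ × ℝ | A * p.1 ^ 2 + 2 * B * p.1 * p.2 + C * p.2 ^ 2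
            + 2 * D * p.1 + 2 * E * p.2 + F ≤ 0}
        = ENNReal.ofReal ((4 * Real.pi / (3 * Real.sqrt 3)) *
            ((1 : ℝ) / 2 *
              |(p₂.1 - p₁.1) * (p₃.2 - p₁.2) - (p₂.2 - p₁.2) * (p₃.1 - p₁.1)|)) ∧
      (∀ x y : ℝ,
        (2 * A * x + 2 * B * y + 2 * D = 0 ∧ 2 * B * x + 2 * C * y + 2 * E = 0) ↔
          (x = (p₁.1 + p₂.1 + p₃.1) / 3 ∧ y = (p₁.2 + p₂.2 + p₃.2) / 3)) := by
  set T := (p₂.1 - p₁.1) * (p₃.2 - p₁.2) - (p₂.2 - p₁.2) * (p₃.1 - p₁.1)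
  set g : ℝ × ℝ := ((p₁.1 + p₂.1 + p₃.1) / 3, (p₁.2 + p₂.2 + p₃.2) / 3)
  -- `p₂ - g = (c - a) / 2` and `p₃ - g = -(c + a) / 2`, so `q` equals `(a × c)²` at each `pᵢ - g`.
  set a₁ := p₁.1 - g.1
  set a₂ := p₁.2 - g.2
  set c₁ := p₂.1 - p₃.1
  set c₂ := p₂.2 - p₃.2
  set A := 3 * a₂ ^ 2 + c₂ ^ 2
  set B := -(3 * a₁ * a₂ + c₁ * c₂)
  set C := 3 * a₁ ^ 2 + c₁ ^ 2
  set r := (2 / 3 * T) ^ 2 with hr_def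
  have hT : T ≠ 0 := det_sub_ne_zero_of_affineIndependent hind
  have hΔ : A * C - B ^ 2 = 3 * r := by simp only [A, B, C, r, T, a₁, a₂, c₁, c₂, g]; ring
  have hr : 0 < r := by positivity
  have hΔpos : 0 < A * C - B ^ 2 := by linarith
  have hA : 0 < A := pos_of_mul_sub_sq_pos (by positivity) hΔpos
  refine ⟨A, B, C, -(A * g.1 + B * g.2), -(B * g.1 + C * g.2),
    A * g.1 ^ 2 + 2 * B * g.1 * g.2 + C * g.2 ^ 2 - r, hA, hΔpos, ?_, ?_, ?_, ?_,
    conic_gradient_eq_zero_iff hΔpos.ne' g.1 g.2⟩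
  · simp only [A, B, C, r, T, a₁, a₂, c₁, c₂, g]; ring
  · simp only [A, B, C, r, T, a₁, a₂, c₁, c₂, g]; ring
  · simp only [A, B, C, r, T, a₁, a₂, c₁, c₂, g]; ring
  simp only [conic_eq_quadForm_sub_sub, sub_nonpos]
  rw [volume_setOf_quadForm_sub_le hA hΔpos hr, hΔ]
  congr 1
  rw [sqrt_mul' 3 hr.le, sqrt_sq_eq_abs, abs_mul, hr_def, mul_pow, ← sq_abs T]
  field_simp
  norm_num
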